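/- (Quantum violation of the entropic Klyachko inequality.) For φ > 0, define unit vectors in ℝ³: v₁ = (0,0,1), v₂ = (sin φ, cos φ, 0), v₃ = N⁻¹(cos φ sin φ, −sin φ sin φ, sin φ cos φ) with N = √(sin²φ + cos²φ sin²φ), v₄ = (0, cos φ, sin φ), v₅ = (1,0,0), and the unit vector ψ = (sin 2φ, cos 2φ, sin 2φ)/√(1 + sin²2φ). Set p_i = ⟨v_i, ψ⟩² for i = 1,…,5, and for each i (indices mod 5) let Q_i be the distribution on outcome pairs with Q_i(1,0) = p_i, Q_i(0,1) = p_{i+1}, Q_i(0,0) = 1 − p_i − p_{i+1}, Q_i(1,1) = 0. Then there exists φ₀ > 0 such that for all φ ∈ (0, φ₀) these are valid probability distributions and the entropic Klyachko inequality is violated: H(Q₅) + h(p₂) + h(p₃) + h(p₄) − H(Q₁) − H(Q₂) − H(Q₃) − H(Q₄) > 0, where Q₅ is the joint distribution of (X₁, X₅), Q_i (i ≤ 4) that of (X_i, X_{i+1}), and h(p_i) is the entropy of the marginal of X_i. -/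

import Mathlib

/-- Joint Shannon entropy (in bits) of a bipartite outcome distribution,
with the convention `0 * logb 2 0 = 0` (automatic since `Real.logb 2 0 = 0`). -/
noncomputable def pairEntropy {β γ : Type*} [Fintype β] [Fintype γ] (q : β → γ → ℝ) : ℝ :=
  -∑ b, ∑ c, q b c * Real.logb 2 (q b c)

/-- The binary entropy `h(t) = −t log₂ t − (1−t) log₂ (1−t)`. -/
noncomputable def binEnt (t : ℝ) : ℝ :=
  -t * Real.logb 2 t - (1 - t) * Real.logb 2 (1 - t)

/-- Normalization factor `N = √(sin²φ + cos²φ sin²φ)`. -/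
noncomputable def Nrm (φ : ℝ) : ℝ :=
  Real.sqrt (Real.sin φ ^ 2 + Real.cos φ ^ 2 * Real.sin φ ^ 2)

/-- The five Klyachko vectors in `ℝ³` (0-indexed: `klyVec φ i` is `v_{i+1}`). -/
noncomputable def klyVec (φ : ℝ) : Fin 5 → ℝ × ℝ × ℝ :=
  ![((0 : ℝ), (0 : ℝ), (1 : ℝ)),
    (Real.sin φ, Real.cos φ, (0 : ℝ)),
    ((Nrm φ)⁻¹ * (Real.cos φ * Real.sin φ), (Nrm φ)⁻¹ * (-(Real.sin φ * Real.sin φ)),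
      (Nrm φ)⁻¹ * (Real.sin φ * Real.cos φ)),
    ((0 : ℝ), Real.cos φ, Real.sin φ),
    ((1 : ℝ), (0 : ℝ), (0 : ℝ))]

/-- The state `ψ = (sin 2φ, cos 2φ, sin 2φ)/√(1 + sin²2φ)`. -/
noncomputable def klyState (φ : ℝ) : ℝ × ℝ × ℝ :=
  ((Real.sqrt (1 + Real.sin (2 * φ) ^ 2))⁻¹ * Real.sin (2 * φ),
   (Real.sqrt (1 + Real.sin (2 * φ) ^ 2))⁻¹ * Real.cos (2 * φ),
   (Real.sqrt (1 + Real.sin (2 * φ) ^ 2))⁻¹ * Real.sin (2 * φ))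

/-- The Euclidean inner product on `ℝ³ = ℝ × ℝ × ℝ`. -/
noncomputable def ip3 (u w : ℝ × ℝ × ℝ) : ℝ :=
  u.1 * w.1 + u.2.1 * w.2.1 + u.2.2 * w.2.2

/-- `p_i = ⟨v_i, ψ⟩²` (0-indexed). -/
noncomputable def klyProb (φ : ℝ) (i : Fin 5) : ℝ :=
  ip3 (klyVec φ i) (klyState φ) ^ 2

/-- The quantum joint distribution of `(X_i, X_{i+1})` (indices mod 5, 0-indexed):
`Q_i(1,0) = p_i`, `Q_i(0,1) = p_{i+1}`, `Q_i(0,0) = 1 − p_i − p_{i+1}`, `Q_i(1,1) = 0`. -/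
noncomputable def klyQ (φ : ℝ) (i : Fin 5) : Fin 2 → Fin 2 → ℝ :=
  fun a b =>
    if a = 1 ∧ b = 0 then klyProb φ i
    else if a = 0 ∧ b = 1 then klyProb φ (i + 1)
    else if a = 0 ∧ b = 0 then 1 - klyProb φ i - klyProb φ (i + 1)
    else 0


/-!
Write `t = sin² φ` and `η = negMulLog`. The `p_i` are rational functions of `t`:
`p₁ = p₅ ≈ 4t`, `p₂ = p₄ ≈ 1 - 5t`, `p₃ ≈ 9t/2`, and the empty cells `1 - p_i - p_{i+1}` of
`(X₁,X₂), …, (X₄,X₅)` are `≈ t, t/2, t/2, t`. Once the marginal terms shared by the joint and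
single entropies cancel, `log 2` times the Klyachko expression is, up to nonnegative terms and
`O(t)`, equal to `2 η(1 - p₂) - η(p₃) - 2 η(t) - 2 η(t/2)`. Since `η(x) ≈ x log (1/x)` for small
`x`, this is `≈ (10 - 9/2 - 2 - 1) t log (1/t) > 0`.
-/

open Real

theorem negMulLog_eq_mul_log_inv (x : ℝ) : negMulLog x = x * log x⁻¹ := by
  rw [negMulLog, log_inv]; ring

theorem negMulLog_le_mul_log_inv {d x C : ℝ} (hd : 0 < d) (hdx : d ≤ x) (hxC : x ≤ C)
    (hx1 : x ≤ 1) : negMulLog x ≤ C * log d⁻¹ := by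
  have hx : 0 < x := hd.trans_le hdx
  rw [negMulLog_eq_mul_log_inv]
  exact mul_le_mul hxC (log_le_log (by positivity) (inv_anti₀ hd hdx))
    (log_nonneg ((one_le_inv₀ hx).2 hx1)) (hx.le.trans hxC)

theorem mul_log_inv_le_negMulLog {d x C : ℝ} (hd : 0 < d) (hdx : d ≤ x) (hxC : x ≤ C)
    (hC1 : C ≤ 1) : d * log C⁻¹ ≤ negMulLog x := by
  have hx : 0 < x := hd.trans_le hdx
  rw [negMulLog_eq_mul_log_inv]
  exact mul_le_mul hdx (log_le_log (inv_pos.2 (hx.trans_le hxC)) (inv_anti₀ hx hxC))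
    (log_nonneg ((one_le_inv₀ (hx.trans_le hxC)).2 hC1)) hx.le

/-- For small `x`, `negMulLog x ≈ x log (1/x)`: the leading terms in `t log (1/t)` are
`10` on the right against `9/2 + 2 + 1` on the left. -/
theorem negMulLog_add_lt_two_negMulLog {t a b r q : ℝ} (ht0 : 0 < t) (ht : t ≤ (2 ^ 24)⁻¹)
    (ha : 49 / 10 * t ≤ a) (ha' : a ≤ 5 * t) (hb : t ≤ b) (hb' : b ≤ 9 / 2 * t)
    (hr : t / 2 ≤ r) (hr' : r ≤ t) (hq : t / 4 ≤ q) (hq' : q ≤ t / 2) :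
    negMulLog b + 2 * negMulLog (1 - a) + 2 * negMulLog r + 2 * negMulLog q <
      2 * negMulLog a := by
  have ht1 : t ≤ 1 / 100 := ht.trans (by norm_num)
  have hlog_t : 24 * log 2 ≤ log t⁻¹ := by
    rw [← Nat.cast_ofNat, ← log_pow]
    exact log_le_log (by positivity) ((le_inv_comm₀ ht0 (by positivity)).1 ht)
  have hlog4 : log 4 = 2 * log 2 := by
    rw [show (4 : ℝ) = 2 ^ 2 by norm_num, log_pow]; norm_num
  have hlog8 : log 8 = 3 * log 2 := by
    rw [show (8 : ℝ) = 2 ^ 3 by norm_num, log_pow]; norm_num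
  have hA := mul_log_inv_le_negMulLog (C := 8 * t) (by positivity) ha (by linarith) (by linarith)
  have hB := negMulLog_le_mul_log_inv ht0 hb hb' (by linarith)
  have hR := negMulLog_le_mul_log_inv (by positivity) hr hr' (by linarith)
  have hQ := negMulLog_le_mul_log_inv (by positivity) hq hq' (by linarith)
  have hA' : negMulLog (1 - a) ≤ a := by
    simpa using negMulLog_le_one_sub_self (x := 1 - a) (by linarith)
  rw [log_inv, log_mul (by norm_num) ht0.ne', hlog8] at hA
  rw [log_inv, log_div ht0.ne' (by norm_num)] at hR hQ
  rw [hlog4] at hQ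
  rw [log_inv] at hB hlog_t
  have hl2 : t * (1 / 2) < t * log 2 :=
    mul_lt_mul_of_pos_left (by linarith [log_two_gt_d9]) ht0
  linarith [mul_le_mul_of_nonneg_left hlog_t ht0.le]

theorem pairEntropy_eq_sum_negMulLog {β γ : Type*} [Fintype β] [Fintype γ] (q : β → γ → ℝ) :
    pairEntropy q = (∑ b, ∑ c, negMulLog (q b c)) / log 2 := by
  simp only [pairEntropy, negMulLog, logb, Finset.sum_div, ← Finset.sum_neg_distrib]
  congr! 2 with b c
  ring

theorem binEnt_eq_negMulLog_add_negMulLog_one_sub (x : ℝ) :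
    binEnt x = (negMulLog x + negMulLog (1 - x)) / log 2 := by
  simp only [binEnt, negMulLog, logb]
  ring

theorem pairEntropy_klyQ (φ : ℝ) (i : Fin 5) :
    pairEntropy (klyQ φ i) = (negMulLog (klyProb φ i) + negMulLog (klyProb φ (i + 1)) +
      negMulLog (1 - klyProb φ i - klyProb φ (i + 1))) / log 2 := by
  rw [pairEntropy_eq_sum_negMulLog]
  simp [klyQ, Fin.sum_univ_two]
  ring

theorem klyQ_nonneg {φ : ℝ} (h : ∀ i, 0 ≤ 1 - klyProb φ i - klyProb φ (i + 1)) (i : Fin 5)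
    (a b : Fin 2) : 0 ≤ klyQ φ i a b := by
  unfold klyQ
  split_ifs
  · exact sq_nonneg _
  · exact sq_nonneg _
  · exact h i
  · exact le_rfl

theorem klyQ_sum (φ : ℝ) (i : Fin 5) : ∑ a, ∑ b, klyQ φ i a b = 1 := by
  simp [klyQ, Fin.sum_univ_two]

noncomputable def klyachkoGap (p : Fin 5 → ℝ) : ℝ :=
  negMulLog (1 - p 4 - p 0) + (negMulLog (1 - p 1) - negMulLog (p 1)) +
    (negMulLog (1 - p 2) - negMulLog (p 2)) + (negMulLog (1 - p 3) - negMulLog (p 3)) -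
    negMulLog (1 - p 0 - p 1) - negMulLog (1 - p 1 - p 2) - negMulLog (1 - p 2 - p 3) -
    negMulLog (1 - p 3 - p 4)

theorem klyachko_expression_eq (φ : ℝ) :
    pairEntropy (klyQ φ 4) + binEnt (klyProb φ 1) + binEnt (klyProb φ 2) + binEnt (klyProb φ 3) -
        pairEntropy (klyQ φ 0) - pairEntropy (klyQ φ 1) - pairEntropy (klyQ φ 2) -
        pairEntropy (klyQ φ 3) = klyachkoGap (klyProb φ) / log 2 := by
  simp only [pairEntropy_klyQ, binEnt_eq_negMulLog_add_negMulLog_one_sub, klyachkoGap,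
    Fin.reduceAdd]
  ring

theorem klyProb_eq_ip3_sq_div (φ : ℝ) (i : Fin 5) :
    klyProb φ i =
      ip3 (klyVec φ i) (sin (2 * φ), cos (2 * φ), sin (2 * φ)) ^ 2 / (1 + sin (2 * φ) ^ 2) := by
  have hk : (√(1 + sin (2 * φ) ^ 2))⁻¹ ^ 2 = (1 + sin (2 * φ) ^ 2)⁻¹ := by
    rw [inv_pow, sq_sqrt (by positivity)]
  simp only [klyProb, klyState, ip3]
  rw [div_eq_mul_inv, ← hk]
  ring

/-- `1 + sin² 2φ`, the squared norm of the unnormalized state, as a function of `t = sin² φ`. -/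
noncomputable def klyDen (t : ℝ) : ℝ := 1 + 4 * t * (1 - t)

noncomputable def klyProbOfSinSq (t : ℝ) : Fin 5 → ℝ :=
  ![4 * t * (1 - t) / klyDen t, (1 - t) / klyDen t, t * (3 - 2 * t) ^ 2 / ((2 - t) * klyDen t),
    (1 - t) / klyDen t, 4 * t * (1 - t) / klyDen t]

theorem klyProb_eq_klyProbOfSinSq {φ : ℝ} (hφ : sin φ ≠ 0) :
    klyProb φ = klyProbOfSinSq (sin φ ^ 2) := by
  have hc : cos φ ^ 2 = 1 - sin φ ^ 2 := cos_sq' φ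
  have hN : Nrm φ ^ 2 = sin φ ^ 2 * (2 - sin φ ^ 2) := by
    rw [Nrm, sq_sqrt (by positivity), hc]; ring
  have hN0 : Nrm φ ≠ 0 := (Real.sqrt_pos.2 (by positivity)).ne'
  have hD : 1 + sin (2 * φ) ^ 2 = klyDen (sin φ ^ 2) := by
    rw [klyDen, sin_two_mul, ← hc]; ring
  funext i
  rw [klyProb_eq_ip3_sq_div, hD, sin_two_mul, cos_two_mul']
  fin_cases i <;> simp only [klyVec, klyProbOfSinSq, ip3] <;> norm_num
  · congr 1; linear_combination 4 * sin φ ^ 2 * hc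
  · congr 1; linear_combination (cos φ ^ 2 * (sin φ ^ 2 + cos φ ^ 2 + 1) + 1) * sin_sq_add_cos_sq φ
  · have h2 : 2 - sin φ ^ 2 ≠ 0 := by nlinarith [sin_sq_le_one φ]
    field_simp
    rw [hN, hc]
    ring
  · congr 1; linear_combination (cos φ ^ 2 * (sin φ ^ 2 + cos φ ^ 2 + 1) + 1) * sin_sq_add_cos_sq φ
  · congr 1; linear_combination 4 * sin φ ^ 2 * hc

section SinSq

variable {t : ℝ}

theorem one_le_klyDen (h0 : 0 ≤ t) (h1 : t ≤ 1) : 1 ≤ klyDen t := by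
  unfold klyDen; nlinarith

theorem klyDen_le_two (t : ℝ) : klyDen t ≤ 2 := by
  unfold klyDen; nlinarith [sq_nonneg (2 * t - 1)]

theorem one_sub_klyProbOfSinSq_one (h0 : 0 ≤ t) (h1 : t ≤ 1) :
    1 - klyProbOfSinSq t 1 = t * (5 - 4 * t) / klyDen t := by
  have := one_le_klyDen h0 h1
  simp only [klyProbOfSinSq, Matrix.cons_val]
  field_simp
  unfold klyDen
  ring

theorem one_sub_klyProbOfSinSq_zero_sub_one (h0 : 0 ≤ t) (h1 : t ≤ 1) :
    1 - klyProbOfSinSq t 0 - klyProbOfSinSq t 1 = t / klyDen t := by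
  have := one_le_klyDen h0 h1
  simp only [klyProbOfSinSq, Matrix.cons_val]
  field_simp
  unfold klyDen
  ring

theorem one_sub_klyProbOfSinSq_one_sub_two (h0 : 0 ≤ t) (h1 : t ≤ 1) :
    1 - klyProbOfSinSq t 1 - klyProbOfSinSq t 2 = t * (1 - t) / ((2 - t) * klyDen t) := by
  have := one_le_klyDen h0 h1
  have : 2 - t ≠ 0 := by linarith
  simp only [klyProbOfSinSq, Matrix.cons_val]
  field_simp
  unfold klyDen
  ring

theorem one_sub_klyProbOfSinSq_four_sub_zero (h0 : 0 ≤ t) (h1 : t ≤ 1) :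
    1 - klyProbOfSinSq t 4 - klyProbOfSinSq t 0 = (1 - 2 * t) ^ 2 / klyDen t := by
  have := one_le_klyDen h0 h1
  simp only [klyProbOfSinSq, Matrix.cons_val]
  field_simp
  unfold klyDen
  ring

theorem one_sub_klyProbOfSinSq_sub_succ_nonneg (h0 : 0 ≤ t) (h1 : t ≤ 1) (i : Fin 5) :
    0 ≤ 1 - klyProbOfSinSq t i - klyProbOfSinSq t (i + 1) := by
  have hD := one_le_klyDen h0 h1
  have h01 := one_sub_klyProbOfSinSq_zero_sub_one h0 h1
  have h12 := one_sub_klyProbOfSinSq_one_sub_two h0 h1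
  have h40 := one_sub_klyProbOfSinSq_four_sub_zero h0 h1
  have h12_nonneg : 0 ≤ t * (1 - t) / ((2 - t) * klyDen t) := by
    apply div_nonneg <;> apply mul_nonneg <;> linarith
  have hP3 : klyProbOfSinSq t 3 = klyProbOfSinSq t 1 := rfl
  have hP4 : klyProbOfSinSq t 4 = klyProbOfSinSq t 0 := rfl
  fin_cases i <;> simp only [Fin.reduceFinMk, Fin.reduceAdd, Fin.isValue]
  · rw [h01]; positivity
  · rwa [h12]
  · rwa [hP3, sub_right_comm, h12]
  · rw [hP3, hP4, sub_right_comm, h01]; positivity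
  · rw [h40]; positivity

theorem klyachkoGap_klyProbOfSinSq_pos (ht0 : 0 < t) (ht : t ≤ (2 ^ 24)⁻¹) :
    0 < klyachkoGap (klyProbOfSinSq t) := by
  have ht1 : t ≤ 1 / 1000 := ht.trans (by norm_num)
  have hD1 := one_le_klyDen ht0.le (by linarith)
  have hD2 := klyDen_le_two t
  have hD : klyDen t = 1 + 4 * t * (1 - t) := rfl
  have h1 := one_sub_klyProbOfSinSq_one ht0.le (by linarith)
  have h01 := one_sub_klyProbOfSinSq_zero_sub_one ht0.le (by linarith)
  have h12 := one_sub_klyProbOfSinSq_one_sub_two ht0.le (by linarith)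
  have h40 := one_sub_klyProbOfSinSq_four_sub_zero ht0.le (by linarith)
  set P := klyProbOfSinSq t
  have hP2 : P 2 = t * (3 - 2 * t) ^ 2 / ((2 - t) * klyDen t) := rfl
  have hP3 : P 3 = P 1 := rfl
  have hP4 : P 4 = P 0 := rfl
  have h2t : 0 < (2 - t) * klyDen t := mul_pos (by linarith) (by linarith)
  have ha : 49 / 10 * t ≤ 1 - P 1 := by rw [h1, le_div_iff₀ (by linarith)]; nlinarith
  have ha' : 1 - P 1 ≤ 5 * t := by rw [h1, div_le_iff₀ (by linarith)]; nlinarith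
  have hb : t ≤ P 2 := by rw [hP2, le_div_iff₀ h2t, hD]; nlinarith
  have hb' : P 2 ≤ 9 / 2 * t := by rw [hP2, div_le_iff₀ h2t, hD]; nlinarith
  have hr : t / 2 ≤ 1 - P 0 - P 1 := by
    rw [h01]; exact div_le_div_of_nonneg_left ht0.le (by linarith) hD2
  have hr' : 1 - P 0 - P 1 ≤ t := by rw [h01]; exact div_le_self ht0.le hD1
  have hq : t / 4 ≤ 1 - P 1 - P 2 := by rw [h12, div_le_div_iff₀ (by norm_num) h2t, hD]; nlinarith
  have hq' : 1 - P 1 - P 2 ≤ t / 2 := by rw [h12, div_le_div_iff₀ h2t (by norm_num), hD]; nlinarith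
  have h40_nonneg : 0 ≤ negMulLog (1 - P 4 - P 0) := negMulLog_nonneg (by rw [h40]; positivity)
    (by rw [h40, div_le_one (by linarith), hD]; nlinarith)
  have h2_nonneg : 0 ≤ negMulLog (1 - P 2) := negMulLog_nonneg (by linarith) (by linarith)
  have key := negMulLog_add_lt_two_negMulLog ht0 ht ha ha' hb hb' hr hr' hq hq'
  rw [sub_sub_cancel] at key
  unfold klyachkoGap
  rw [hP4] at h40_nonneg
  rw [hP3, hP4, sub_right_comm 1 (P 2) (P 1), sub_right_comm 1 (P 1) (P 0)]
  linarith

end SinSq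

/-- Quantum violation of the entropic Klyachko inequality: there is `φ₀ > 0` such that
for all `φ ∈ (0, φ₀)` the distributions `Q_i` are valid probability distributions and
`H(Q₅) + h(p₂) + h(p₃) + h(p₄) − H(Q₁) − H(Q₂) − H(Q₃) − H(Q₄) > 0`
(in the paper's 1-based notation; here everything is 0-indexed). -/
theorem klyachko_quantum_violation :
    ∃ φ₀ > (0 : ℝ), ∀ φ : ℝ, 0 < φ → φ < φ₀ →
      ((∀ (i : Fin 5) (a b : Fin 2), 0 ≤ klyQ φ i a b) ∧
        (∀ i : Fin 5, ∑ a, ∑ b, klyQ φ i a b = 1)) ∧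
      0 < pairEntropy (klyQ φ 4) + binEnt (klyProb φ 1) + binEnt (klyProb φ 2) +
            binEnt (klyProb φ 3) -
          pairEntropy (klyQ φ 0) - pairEntropy (klyQ φ 1) - pairEntropy (klyQ φ 2) -
          pairEntropy (klyQ φ 3) := by
  refine ⟨(2 ^ 12)⁻¹, by positivity, fun φ hφ0 hφ => ?_⟩
  have hs : 0 < sin φ := sin_pos_of_pos_of_lt_pi hφ0 (by linarith [pi_gt_three])
  have ht : sin φ ^ 2 ≤ (2 ^ 24)⁻¹ :=
    calc sin φ ^ 2 ≤ ((2 ^ 12)⁻¹) ^ 2 := pow_le_pow_left₀ hs.le ((sin_le hφ0.le).trans hφ.le) 2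
      _ = (2 ^ 24)⁻¹ := by norm_num
  have hp := klyProb_eq_klyProbOfSinSq hs.ne'
  refine ⟨⟨klyQ_nonneg (hp ▸ one_sub_klyProbOfSinSq_sub_succ_nonneg (by positivity)
    (sin_sq_le_one φ)), klyQ_sum φ⟩, ?_⟩
  rw [klyachko_expression_eq, hp]
  exact div_pos (klyachkoGap_klyProbOfSinSq_pos (by positivity) ht) (log_pos one_lt_two)
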